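/- arXiv:1306.2612 — 2 statements merged into one kernel-verified Lean document; each statement's English description precedes it below -/
import Mathlib

section
/- Let S be a Hausdorff pseudocompact primitive topological inverse semigroup, written as the orthogonal sum of a family {B_{λ_i}(G_i)}_{i∈I} of topological Brandt semigroups with zero. Then every non-zero H-class of S is a pseudocompact closed-and-open subset of S. -/
/-!
In a topological inverse semigroup the `H`-class of `a` is the fibre of the continuous map
`x ↦ (x⁻¹x, xx⁻¹)` over `(a⁻¹a, aa⁻¹)`, hence closed; this rests on the commutation of idempotents.
If moreover the semigroup is primitive and `a ≠ 0`, then with `E = aa⁻¹`, `F = a⁻¹a` the condition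
`ExF ≠ 0` forces `xx⁻¹ = E` and `x⁻¹x = F` (the idempotent `E·xx⁻¹` is non-zero and below both),
so the `H`-class is the preimage of `S \ {0}` under `x ↦ ExF`, hence open. Clopen subspaces of
pseudocompact spaces are pseudocompact.
-/

open Topology

/-- A (Hausdorff) topological space is *pseudocompact* if every locally finite
family of non-empty open subsets is finite. -/
def IsPseudocompact (X : Type*) [TopologicalSpace X] : Prop :=
  ∀ 𝒰 : Set (Set X), (∀ U ∈ 𝒰, IsOpen U ∧ U.Nonempty) →
    LocallyFinite (fun U : 𝒰 => (U : Set X)) → 𝒰.Finite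

/-- `inv` witnesses that the semigroup `S` is an *inverse semigroup*:
for every `x`, `inv x` is the unique `y` with `x*y*x = x` and `y*x*y = y`. -/
structure IsInverseSemigroup (S : Type*) [Mul S] (inv : S → S) : Prop where
  mul_inv_mul : ∀ x : S, x * inv x * x = x
  inv_mul_inv : ∀ x : S, inv x * x * inv x = inv x
  inv_unique : ∀ x y : S, x * y * x = x → y * x * y = y → y = inv x

/-- A semigroup with zero is *primitive* when every non-zero idempotent is
minimal among non-zero idempotents for the natural partial order
`f ≤ e ↔ f*e = e*f = f`. -/
def IsPrimitiveInverse (S : Type*) [Mul S] [Zero S] : Prop :=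
  ∀ e f : S, IsIdempotentElem e → e ≠ 0 → IsIdempotentElem f → f ≠ 0 →
    f * e = f → e * f = f → f = e

/-- The orthogonal sum of the family of Brandt extensions `B_{λ i}(G i)`:
the set `{0} ∪ ⋃ i, (λ i × G i × λ i)`. -/
abbrev OrthSum (I : Type*) (ι : I → Type*) (G : I → Type*) : Type _ :=
  Option (Σ i : I, ι i × G i × ι i)

instance (I : Type*) (ι : I → Type*) (G : I → Type*) : Zero (OrthSum I ι G) :=
  ⟨(none : Option (Σ i : I, ι i × G i × ι i))⟩

/-- The non-zero element `(α, g, β)` of the summand `B_{λ i}(G i)`. -/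
def OrthSum.elem {I : Type*} {ι : I → Type*} {G : I → Type*}
    (i : I) (α : ι i) (g : G i) (β : ι i) : OrthSum I ι G :=
  some ⟨i, (α, g, β)⟩

open Classical in
/-- Multiplication of the orthogonal sum: products are computed inside the
summand `B_{λ i}(G i)` when both factors lie in it, and are `0` otherwise. -/
noncomputable instance (I : Type*) (ι : I → Type*) (G : I → Type*) [∀ i, Mul (G i)] :
    Mul (OrthSum I ι G) :=
  ⟨fun x y =>
    match x, y with
    | some ⟨i, (α, a, β)⟩, some ⟨j, (γ, b, δ)⟩ =>
        if h : i = j then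
          (if cast (congrArg ι h) β = γ then
            (some ⟨j, (cast (congrArg ι h) α, (cast (congrArg G h) a) * b, δ)⟩ :
              Option (Σ i : I, ι i × G i × ι i))
          else none)
        else none
    | _, _ => none⟩

/-- A witness that the semigroup `S` with zero is (isomorphic, as a semigroup
with zero, to) the orthogonal sum of a family of Brandt semigroups
`B_{λ i}(G i)`, `λ i ≥ 1`. -/
structure BrandtDecomposition (S : Type*) [Mul S] [Zero S] where
  I : Type*
  ι : I → Type*
  G : I → Type*
  [instNonempty : ∀ i, Nonempty (ι i)]
  [instGroup : ∀ i, Group (G i)]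
  e : S ≃ OrthSum I ι G
  map_mul : ∀ x y : S, e (x * y) = e x * e y
  map_zero : e 0 = 0

/-- Green's relation `H = L ∩ R` on a semigroup. -/
def GreenH {S : Type*} [Mul S] (a b : S) : Prop :=
  (insert a (Set.range fun s : S => s * a) = insert b (Set.range fun s : S => s * b)) ∧
    (insert a (Set.range fun s : S => a * s) = insert b (Set.range fun s : S => b * s))

/-- The `H`-class of an element. -/
def hclass {S : Type*} [Mul S] (a : S) : Set S := {b | GreenH a b}

theorem LocallyFinite.image_subtype_val {X ι : Type*} [TopologicalSpace X] {A : Set X}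
    (hA : IsClosed A) {f : ι → Set A} (hf : LocallyFinite f) :
    LocallyFinite fun i => ((↑) : A → X) '' f i := by
  intro x
  by_cases hx : x ∈ A
  · obtain ⟨t, ht, hfin⟩ := hf ⟨x, hx⟩
    obtain ⟨u, hu, hut⟩ := (mem_nhds_subtype A ⟨x, hx⟩ t).mp ht
    refine ⟨u, hu, hfin.subset ?_⟩
    rintro i ⟨_, ⟨y, hy, rfl⟩, hyu⟩
    exact ⟨y, hy, hut hyu⟩
  · refine ⟨Aᶜ, hA.isOpen_compl.mem_nhds hx, ?_⟩
    convert Set.finite_empty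
    refine Set.eq_empty_of_forall_notMem ?_
    rintro i ⟨_, ⟨y, -, rfl⟩, hy⟩
    exact hy y.2

theorem IsClopen.isPseudocompact {X : Type*} [TopologicalSpace X] {A : Set X}
    (hA : IsClopen A) (hX : IsPseudocompact X) : IsPseudocompact A := by
  intro 𝒰 h𝒰 hlf
  have himage : (Set.image ((↑) : A → X) '' 𝒰).Finite := by
    refine hX _ ?_ ?_
    · rintro _ ⟨U, hU, rfl⟩
      exact ⟨hA.isOpen.isOpenMap_subtype_val _ (h𝒰 U hU).1, (h𝒰 U hU).2.image _⟩
    · rw [Set.image_eq_range]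
      exact (hlf.image_subtype_val hA.isClosed).on_range
  exact himage.of_finite_image (Set.image_injective.mpr Subtype.val_injective).injOn

def principalLeftIdeal {S : Type*} [Mul S] (a : S) : Set S :=
  insert a (Set.range fun s : S => s * a)

def principalRightIdeal {S : Type*} [Mul S] (a : S) : Set S :=
  insert a (Set.range fun s : S => a * s)

theorem greenH_iff_principalIdeal_eq {S : Type*} [Mul S] {a b : S} :
    GreenH a b ↔ principalLeftIdeal a = principalLeftIdeal b ∧
      principalRightIdeal a = principalRightIdeal b :=
  Iff.rfl

theorem mem_hclass {S : Type*} [Mul S] {a b : S} : b ∈ hclass a ↔ GreenH a b :=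
  Iff.rfl

section PrincipalIdeal

variable {S : Type*} [Semigroup S] {a b x : S}

theorem mul_mem_principalLeftIdeal (s a : S) : s * a ∈ principalLeftIdeal a :=
  Set.mem_insert_of_mem _ ⟨s, rfl⟩

theorem mul_mem_principalRightIdeal (a s : S) : a * s ∈ principalRightIdeal a :=
  Set.mem_insert_of_mem _ ⟨s, rfl⟩

theorem principalLeftIdeal_subset (ha : a ∈ principalLeftIdeal b) :
    principalLeftIdeal a ⊆ principalLeftIdeal b := by
  rintro x (rfl | ⟨s, rfl⟩)
  · exact ha
  · rcases ha with rfl | ⟨t, rfl⟩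
    · exact mul_mem_principalLeftIdeal s a
    · show s * (t * b) ∈ _
      rw [← mul_assoc]
      exact mul_mem_principalLeftIdeal _ b

theorem principalRightIdeal_subset (ha : a ∈ principalRightIdeal b) :
    principalRightIdeal a ⊆ principalRightIdeal b := by
  rintro x (rfl | ⟨s, rfl⟩)
  · exact ha
  · rcases ha with rfl | ⟨t, rfl⟩
    · exact mul_mem_principalRightIdeal a s
    · show b * t * s ∈ _
      rw [mul_assoc]
      exact mul_mem_principalRightIdeal b _

theorem IsIdempotentElem.mul_eq_self_of_mem_principalLeftIdeal {f : S}
    (hf : IsIdempotentElem f) (hx : x ∈ principalLeftIdeal f) : x * f = x := by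
  rcases hx with rfl | ⟨s, rfl⟩
  · exact hf.eq
  · exact hf.mul_mul_self s

theorem IsIdempotentElem.mul_eq_self_of_mem_principalRightIdeal {e : S}
    (he : IsIdempotentElem e) (hx : x ∈ principalRightIdeal e) : e * x = x := by
  rcases hx with rfl | ⟨s, rfl⟩
  · exact he.eq
  · exact he.mul_self_mul s

end PrincipalIdeal

namespace IsInverseSemigroup

variable {S : Type*} [Semigroup S] {inv : S → S}

theorem inv_inv (h : IsInverseSemigroup S inv) (x : S) : inv (inv x) = x :=
  (h.inv_unique _ _ (h.inv_mul_inv x) (h.mul_inv_mul x)).symm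

theorem inv_eq_self (h : IsInverseSemigroup S inv) {e : S} (he : IsIdempotentElem e) :
    inv e = e := by
  have hee : e * e * e = e := by rw [he.eq, he.eq]
  exact (h.inv_unique e e hee hee).symm

theorem isIdempotentElem_mul_inv (h : IsInverseSemigroup S inv) (x : S) :
    IsIdempotentElem (x * inv x) := by
  rw [IsIdempotentElem, ← mul_assoc, h.mul_inv_mul]

theorem isIdempotentElem_inv_mul (h : IsInverseSemigroup S inv) (x : S) :
    IsIdempotentElem (inv x * x) := by
  rw [IsIdempotentElem, ← mul_assoc, h.inv_mul_inv]

/-- `f * inv (e * f) * e` is an inverse of `e * f`, hence equals `inv (e * f)`, which is therefore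
idempotent; so is its inverse `e * f`. -/
theorem isIdempotentElem_mul (h : IsInverseSemigroup S inv) {e f : S}
    (he : IsIdempotentElem e) (hf : IsIdempotentElem f) : IsIdempotentElem (e * f) := by
  have hinv := h.inv_unique (e * f)
  have hmul := h.inv_mul_inv (e * f)
  have hmul' := h.mul_inv_mul (e * f)
  rw [← h.inv_inv (e * f)]
  generalize inv (e * f) = x at hinv hmul hmul' ⊢
  have hx : f * x * e = x := by
    refine hinv _ ?_ ?_
    · calc e * f * (f * x * e) * (e * f) = e * (f * f) * x * (e * e) * f := by
            simp only [mul_assoc]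
        _ = e * f * x * (e * f) := by rw [he.eq, hf.eq]; simp only [mul_assoc]
        _ = e * f := hmul'
    · calc f * x * e * (e * f) * (f * x * e) = f * x * (e * e) * (f * f) * x * e := by
            simp only [mul_assoc]
        _ = f * (x * (e * f) * x) * e := by rw [he.eq, hf.eq]; simp only [mul_assoc]
        _ = f * x * e := by rw [hmul]
  have hxx : IsIdempotentElem x := by
    calc x * x = (f * x * e) * (f * x * e) := by rw [hx]
      _ = f * (x * (e * f) * x) * e := by simp only [mul_assoc]
      _ = x := by rw [hmul, hx]
  rwa [h.inv_eq_self hxx]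

theorem commute_of_isIdempotentElem (h : IsInverseSemigroup S inv) {e f : S}
    (he : IsIdempotentElem e) (hf : IsIdempotentElem f) : Commute e f := by
  have hef := h.isIdempotentElem_mul he hf
  have hfe := h.isIdempotentElem_mul hf he
  have hinv : f * e = inv (e * f) := by
    refine h.inv_unique _ _ ?_ ?_
    · calc e * f * (f * e) * (e * f) = e * (f * f) * (e * e) * f := by simp only [mul_assoc]
        _ = e * f := by rw [he.eq, hf.eq, mul_assoc (e * f), hef.eq]
    · calc f * e * (e * f) * (f * e) = f * (e * e) * (f * f) * e := by simp only [mul_assoc]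
        _ = f * e := by rw [he.eq, hf.eq, mul_assoc (f * e), hfe.eq]
  rw [Commute, SemiconjBy, hinv, h.inv_eq_self hef]

theorem principalLeftIdeal_eq_iff (h : IsInverseSemigroup S inv) {a b : S} :
    principalLeftIdeal a = principalLeftIdeal b ↔ inv a * a = inv b * b := by
  have mem_idem : ∀ x, x ∈ principalLeftIdeal (inv x * x) := fun x => by
    simpa only [← mul_assoc, h.mul_inv_mul] using mul_mem_principalLeftIdeal x (inv x * x)
  constructor
  · have hle : ∀ {x y}, principalLeftIdeal x = principalLeftIdeal y →
        inv x * x * (inv y * y) = inv x * x := fun {x y} hxy =>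
      (h.isIdempotentElem_inv_mul y).mul_eq_self_of_mem_principalLeftIdeal <|
        principalLeftIdeal_subset (mem_idem y) <| hxy ▸ mul_mem_principalLeftIdeal (inv x) x
    intro hab
    rw [← hle hab, (h.commute_of_isIdempotentElem (h.isIdempotentElem_inv_mul a)
      (h.isIdempotentElem_inv_mul b)).eq, hle hab.symm]
  · have hle : ∀ {x y}, inv x * x = inv y * y → principalLeftIdeal x ⊆ principalLeftIdeal y :=
      fun {x y} hxy => principalLeftIdeal_subset <|
        principalLeftIdeal_subset (mul_mem_principalLeftIdeal (inv y) y)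
          (hxy ▸ mem_idem x : x ∈ principalLeftIdeal (inv y * y))
    intro hab
    exact (hle hab).antisymm (hle hab.symm)

theorem principalRightIdeal_eq_iff (h : IsInverseSemigroup S inv) {a b : S} :
    principalRightIdeal a = principalRightIdeal b ↔ a * inv a = b * inv b := by
  have mem_idem : ∀ x, x ∈ principalRightIdeal (x * inv x) := fun x => by
    simpa only [h.mul_inv_mul] using mul_mem_principalRightIdeal (x * inv x) x
  constructor
  · have hle : ∀ {x y}, principalRightIdeal x = principalRightIdeal y →
        y * inv y * (x * inv x) = x * inv x := fun {x y} hxy =>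
      (h.isIdempotentElem_mul_inv y).mul_eq_self_of_mem_principalRightIdeal <|
        principalRightIdeal_subset (mem_idem y) <| hxy ▸ mul_mem_principalRightIdeal x (inv x)
    intro hab
    rw [← hle hab, (h.commute_of_isIdempotentElem (h.isIdempotentElem_mul_inv b)
      (h.isIdempotentElem_mul_inv a)).eq, hle hab.symm]
  · have hle : ∀ {x y}, x * inv x = y * inv y → principalRightIdeal x ⊆ principalRightIdeal y :=
      fun {x y} hxy => principalRightIdeal_subset <|
        principalRightIdeal_subset (mul_mem_principalRightIdeal y (inv y))
          (hxy ▸ mem_idem x : x ∈ principalRightIdeal (y * inv y))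
    intro hab
    exact (hle hab).antisymm (hle hab.symm)

theorem greenH_iff (h : IsInverseSemigroup S inv) {a b : S} :
    GreenH a b ↔ inv a * a = inv b * b ∧ a * inv a = b * inv b := by
  rw [greenH_iff_principalIdeal_eq, h.principalLeftIdeal_eq_iff, h.principalRightIdeal_eq_iff]

theorem hclass_eq_preimage (h : IsInverseSemigroup S inv) (a : S) :
    hclass a = (fun x => (inv x * x, x * inv x)) ⁻¹' {(inv a * a, a * inv a)} := by
  ext x
  simp only [mem_hclass, h.greenH_iff, Set.mem_preimage, Set.mem_singleton_iff,
    Prod.mk.injEq, eq_comm]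

theorem isClosed_hclass [TopologicalSpace S] [T1Space S] [ContinuousMul S]
    (h : IsInverseSemigroup S inv) (hinv : Continuous inv) (a : S) : IsClosed (hclass a) := by
  rw [h.hclass_eq_preimage a]
  exact isClosed_singleton.preimage <|
    (hinv.mul continuous_id).prodMk (continuous_id.mul hinv)

end IsInverseSemigroup

namespace IsPrimitiveInverse

variable {S : Type*} [SemigroupWithZero S] {inv : S → S}

theorem eq_of_mul_ne_zero (hprim : IsPrimitiveInverse S) (h : IsInverseSemigroup S inv)
    {e f : S} (he : IsIdempotentElem e) (hf : IsIdempotentElem f) (hef : e * f ≠ 0) :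
    e = f := by
  have hcomm := h.commute_of_isIdempotentElem he hf
  have hg := h.isIdempotentElem_mul he hf
  have he0 : e ≠ 0 := by rintro rfl; exact hef (zero_mul f)
  have hf0 : f ≠ 0 := by rintro rfl; exact hef (mul_zero e)
  have hge : e * f = e := hprim e (e * f) he he0 hg hef
    (by rw [mul_assoc, ← hcomm.eq, ← mul_assoc, he.eq]) (he.mul_self_mul f)
  have hgf : e * f = f := hprim f (e * f) hf hf0 hg hef (hf.mul_mul_self e)
    (by rw [← mul_assoc, ← hcomm.eq, mul_assoc, hf.eq])
  exact hge.symm.trans hgf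

theorem mul_inv_eq_of_mul_ne_zero (hprim : IsPrimitiveInverse S) (h : IsInverseSemigroup S inv)
    {e x : S} (he : IsIdempotentElem e) (hex : e * x ≠ 0) : x * inv x = e := by
  refine (hprim.eq_of_mul_ne_zero h he (h.isIdempotentElem_mul_inv x) fun h0 => hex ?_).symm
  rw [← h.mul_inv_mul x, ← mul_assoc, ← mul_assoc, mul_assoc e, h0, zero_mul]

theorem inv_mul_eq_of_mul_ne_zero (hprim : IsPrimitiveInverse S) (h : IsInverseSemigroup S inv)
    {f x : S} (hf : IsIdempotentElem f) (hxf : x * f ≠ 0) : inv x * x = f := by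
  refine hprim.eq_of_mul_ne_zero h (h.isIdempotentElem_inv_mul x) hf fun h0 => hxf ?_
  rw [← h.mul_inv_mul x, mul_assoc, mul_assoc, ← mul_assoc (inv x), h0, mul_zero]

theorem hclass_eq_preimage_compl_zero (hprim : IsPrimitiveInverse S)
    (h : IsInverseSemigroup S inv) {a : S} (ha : a ≠ 0) :
    hclass a = (fun x => a * inv a * x * (inv a * a)) ⁻¹' {0}ᶜ := by
  ext x
  simp only [mem_hclass, h.greenH_iff, Set.mem_preimage, Set.mem_compl_singleton_iff]
  constructor
  · rintro ⟨hl, hr⟩ h0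
    rw [hl, hr, h.mul_inv_mul, ← mul_assoc, h.mul_inv_mul] at h0
    apply ha
    calc a = a * inv a * a := (h.mul_inv_mul a).symm
      _ = 0 := by rw [hr, h0, zero_mul, zero_mul]
  · intro hx
    refine ⟨(hprim.inv_mul_eq_of_mul_ne_zero h (h.isIdempotentElem_inv_mul a) ?_).symm,
      (hprim.mul_inv_eq_of_mul_ne_zero h (h.isIdempotentElem_mul_inv a) ?_).symm⟩
    · rintro h0; exact hx (by rw [mul_assoc, h0, mul_zero])
    · rintro h0; exact hx (by rw [h0, zero_mul])

theorem isOpen_hclass [TopologicalSpace S] [T1Space S] [ContinuousMul S]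
    (hprim : IsPrimitiveInverse S) (h : IsInverseSemigroup S inv) {a : S} (ha : a ≠ 0) :
    IsOpen (hclass a) := by
  rw [hprim.hclass_eq_preimage_compl_zero h ha]
  exact isOpen_compl_singleton.preimage <| by fun_prop

end IsPrimitiveInverse

theorem hclass_isClopen_and_pseudocompact_of_pseudocompact_primitive_general
    {S : Type*} [SemigroupWithZero S] [TopologicalSpace S] [T2Space S]
    (continuous_mul : Continuous fun p : S × S => p.1 * p.2)
    (inv : S → S) (hinv : IsInverseSemigroup S inv) (hinvc : Continuous inv)
    (hprim : IsPrimitiveInverse S)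
    (hpc : IsPseudocompact S) :
    ∀ a : S, a ≠ 0 → IsClopen (hclass a) ∧ IsPseudocompact ↥(hclass a) := by
  have : ContinuousMul S := ⟨continuous_mul⟩
  intro a ha
  have hclopen : IsClopen (hclass a) :=
    ⟨hinv.isClosed_hclass hinvc a, hprim.isOpen_hclass hinv ha⟩
  exact ⟨hclopen, hclopen.isPseudocompact hpc⟩

/-- Let `S` be a Hausdorff pseudocompact primitive topological
inverse semigroup, written as the orthogonal sum of a family of topological
Brandt semigroups with zero. Then every non-zero `H`-class of `S` is a
pseudocompact closed-and-open subset of `S`. -/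
theorem hclass_isClopen_and_pseudocompact_of_pseudocompact_primitive
    {S : Type*} [SemigroupWithZero S] [TopologicalSpace S] [T2Space S]
    (continuous_mul : Continuous fun p : S × S => p.1 * p.2)
    (inv : S → S) (hinv : IsInverseSemigroup S inv) (hinvc : Continuous inv)
    (hnt : Nontrivial S) (hprim : IsPrimitiveInverse S)
    (hpc : IsPseudocompact S)
    (hdecomp : BrandtDecomposition S) :
    ∀ a : S, a ≠ 0 → IsClopen (hclass a) ∧ IsPseudocompact ↥(hclass a) :=
  hclass_isClopen_and_pseudocompact_of_pseudocompact_primitive_general continuous_mul inv hinv hinvc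
    hprim hpc
end

section
/- Let S be a primitive Hausdorff pseudocompact topological inverse semigroup, topologically isomorphic to the orthogonal sum ∑_{i∈I} B_{λ_i}(G_i) of topological Brandt λ_i-extensions of topological groups G_i. Then the space S is Tychonoff if and only if for every i ∈ I the underlying space of the topological group G_i is Tychonoff (equivalently, G_i is a T₀-space). -/
open Topology

/-- A witness that the topological semigroup `S` with zero is topologically
isomorphic to the orthogonal sum of a family of topological Brandt
`λ i`-extensions `B_{λ i}(G i)` of topological groups `G i` (in the category of
topological inverse semigroups): an isomorphism of semigroups with zero which
is a homeomorphism, such that each subset `(G i)_{α,β}` of `S` carries the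
topology of the group `G i`. -/
structure TopBrandtDecomposition (S : Type*) [Mul S] [Zero S] [TopologicalSpace S] where
  I : Type*
  ι : I → Type*
  G : I → Type*
  [instNonempty : ∀ i, Nonempty (ι i)]
  [instGroup : ∀ i, Group (G i)]
  [instTopG : ∀ i, TopologicalSpace (G i)]
  [instTopGrpG : ∀ i, IsTopologicalGroup (G i)]
  [instTopSum : TopologicalSpace (OrthSum I ι G)]
  e : S ≃ₜ OrthSum I ι G
  map_mul : ∀ x y : S, e (x * y) = e x * e y
  map_zero : e 0 = 0
  embed : ∀ (i : I) (α β : ι i),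
    Topology.IsEmbedding fun g : G i => e.symm (OrthSum.elem i α g β)


/-!
The copies `L = (G i)_{α,β}` of the groups are clopen in `S`: `L` is the set where
`s ↦ e_α s e_β` is non-zero (`e_α = (α, 1, α)`), and `0 ∉ cl L` because `s ↦ s s⁻¹` is constant
`e_α` on `L`. Pseudocompactness makes every neighbourhood `U` of `0` contain all but finitely many
of them: choose an open `V ∋ 0` with `V V⁻¹ V ⊆ U`; the open sets `L \ cl(V ∩ L)` are disjoint and
locally finite (`V` meets none of them), so only finitely many are non-empty, and in every other
`L` the set `V` is dense, whence `L ⊆ V V⁻¹ V ⊆ U`. Hence `0` has a base of clopen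
neighbourhoods, while every other point lies in a clopen copy of a topological group, which is
completely regular. Conversely, each `G i` embeds into `S`.
-/

open Set Filter Function

theorem IsPseudocompact.finite_setOf_nonempty {X P : Type*} [TopologicalSpace X]
    (hX : IsPseudocompact X) {F : P → Set X} (hF : LocallyFinite F) (hFo : ∀ p, IsOpen (F p))
    (hFd : Pairwise (Disjoint on F)) : {p | (F p).Nonempty}.Finite := by
  set A := {p | (F p).Nonempty}
  have hinj : InjOn F A := fun p hp q _ hpq =>
    hFd.eq fun h => hp.ne_empty (disjoint_self.1 (h.mono_right hpq.le))
  refine Finite.of_finite_image ?_ hinj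
  rw [image_eq_range]
  refine hX _ ?_ (hF.comp_injective Subtype.val_injective).on_range
  rintro _ ⟨p, rfl⟩
  exact ⟨hFo p, p.2⟩

theorem IsClopen.continuous_dite {X Y : Type*} [TopologicalSpace X] [TopologicalSpace Y]
    {O : Set X} [DecidablePred (· ∈ O)] (hO : IsClopen O) {f : O → Y} (hf : Continuous f)
    (c : Y) : Continuous fun x => if h : x ∈ O then f ⟨x, h⟩ else c := by
  refine continuous_iff_continuousAt.2 fun x => ?_
  by_cases hx : x ∈ O
  · rw [← hO.isOpen.isOpenEmbedding_subtypeVal.continuousAt_iff (x := ⟨x, hx⟩)]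
    convert hf.continuousAt
    exact funext fun y => dif_pos y.2
  · refine ContinuousAt.congr (f := fun _ => c) continuousAt_const ?_
    filter_upwards [hO.isClosed.isOpen_compl.mem_nhds hx] with y (hy : y ∉ O)
    rw [dif_neg hy]

theorem IsClopen.exists_continuous_zero_one {X : Type*} [TopologicalSpace X] {O K : Set X}
    {x : X} (hO : IsClopen O) [CompletelyRegularSpace O] (hxO : x ∈ O) (hK : IsClosed K)
    (hxK : x ∉ K) : ∃ f : X → unitInterval, Continuous f ∧ f x = 0 ∧ EqOn f 1 K := by
  classical
  obtain ⟨f, hf, hfx, hfK⟩ := CompletelyRegularSpace.completely_regular (⟨x, hxO⟩ : O) _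
    (hK.preimage continuous_subtype_val) hxK
  refine ⟨fun y => if h : y ∈ O then f ⟨y, h⟩ else 1, hO.continuous_dite hf 1,
    by simp [hxO, hfx], fun y hy => ?_⟩
  by_cases hyO : y ∈ O
  · simpa [hyO] using hfK (show (⟨y, hyO⟩ : O) ∈ Subtype.val ⁻¹' K from hy)
  · simp [hyO]

instance IsTopologicalGroup.completelyRegularSpace (G : Type*) [Group G] [TopologicalSpace G]
    [IsTopologicalGroup G] : CompletelyRegularSpace G :=
  .of_exists_uniformSpace ⟨IsTopologicalGroup.rightUniformSpace G, rfl⟩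

theorem exists_mul_inv_mul_eq_of_dense {G : Type*} [Group G] [TopologicalSpace G]
    [IsTopologicalGroup G] {D : Set G} (hD : Dense D) (hDo : IsOpen D) (t : G) :
    ∃ a ∈ D, ∃ b ∈ D, ∃ c ∈ D, a * b⁻¹ * c = t := by
  obtain ⟨c, hc⟩ := hD.nonempty
  obtain ⟨_, ⟨b, hb, rfl⟩, ha⟩ :=
    hD.inter_open_nonempty _ (hDo.smul (t * c⁻¹)) ⟨_, smul_mem_smul_set hc⟩
  exact ⟨_, ha, b, hb, c, hc, by simp⟩

namespace IsInverseSemigroup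

variable {S : Type*} [MulZeroClass S] {inv : S → S}

theorem inv_zero (hinv : IsInverseSemigroup S inv) : inv 0 = 0 :=
  (hinv.inv_unique 0 0 (by rw [mul_zero]) (by rw [mul_zero])).symm

theorem exists_isOpen_forall_mul_inv_mul_mem [TopologicalSpace S] [ContinuousMul S]
    (hinv : IsInverseSemigroup S inv) (hinvc : Continuous inv) {U : Set S} (hU : U ∈ 𝓝 0) :
    ∃ V, IsOpen V ∧ (0 : S) ∈ V ∧ ∀ a ∈ V, ∀ b ∈ V, ∀ c ∈ V, a * inv b * c ∈ U := by
  have hm : Tendsto (fun t : S × S × S => t.1 * inv t.2.1 * t.2.2) (𝓝 0 ×ˢ (𝓝 0 ×ˢ 𝓝 0))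
      (𝓝 0) := by
    rw [← nhds_prod_eq, ← nhds_prod_eq]
    convert (by fun_prop : Continuous fun t : S × S × S => t.1 * inv t.2.1 * t.2.2).tendsto
      ((0 : S), (0 : S), (0 : S))
    simp [hinv.inv_zero]
  have hbasis := (nhds_basis_opens (0 : S)).prod_same_index (nhds_basis_opens (0 : S)).prod_self
    fun {V W} hV hW => ⟨V ∩ W, ⟨⟨hV.1, hW.1⟩, hV.2.inter hW.2⟩, inter_subset_left,
      prod_mono inter_subset_right inter_subset_right⟩
  obtain ⟨V, ⟨h0V, hVo⟩, hVU⟩ := hbasis.mem_iff.1 (hm hU)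
  exact ⟨V, hVo, h0V, fun a ha b hb c hc => hVU (mk_mem_prod ha (mk_mem_prod hb hc))⟩

end IsInverseSemigroup

namespace OrthSum

variable {I : Type*} {ι : I → Type*} {G : I → Type*}

theorem elem_mul_elem [∀ i, Mul (G i)] (i : I) (α β γ : ι i) (a b : G i) :
    (elem i α a β * elem i β b γ : OrthSum I ι G) = elem i α (a * b) γ := by
  simp [elem, HMul.hMul, Mul.mul]

theorem elem_mul_elem_of_ne [∀ i, Mul (G i)] {i j : I} (α β : ι i) (γ δ : ι j) (a : G i)
    (b : G j) (h : (⟨i, β⟩ : Σ i, ι i) ≠ ⟨j, γ⟩) :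
    (elem i α a β * elem j γ b δ : OrthSum I ι G) = 0 := by
  by_cases hij : i = j
  · subst hij
    have hβγ : β ≠ γ := fun h' => h (h' ▸ rfl)
    simp [elem, HMul.hMul, Mul.mul, hβγ, OfNat.ofNat, Zero.zero]
  · simp [elem, HMul.hMul, Mul.mul, hij, OfNat.ofNat, Zero.zero]

theorem sigma_eq_of_elem_eq {i j : I} {α β : ι i} {γ δ : ι j} {a : G i} {b : G j}
    (h : (elem i α a β : OrthSum I ι G) = elem j γ b δ) :
    (⟨i, (α, β)⟩ : Σ i, ι i × ι i) = ⟨j, (γ, δ)⟩ := by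
  cases h
  rfl

end OrthSum

namespace TopBrandtDecomposition

attribute [local instance] instGroup instTopG instTopGrpG instTopSum

variable {S : Type*} [MulZeroClass S] [TopologicalSpace S] {inv : S → S}

section

variable (d : TopBrandtDecomposition S)

def cell (i : d.I) (α : d.ι i) (g : d.G i) (β : d.ι i) : S :=
  d.e.symm (OrthSum.elem i α g β)

/-- The copy `(G i)_{α,β}` of `G i` in `S`, indexed by `p = ⟨i, (α, β)⟩`. -/
def layer (p : Σ i, d.ι i × d.ι i) : Set S :=
  range fun g => d.cell p.1 p.2.1 g p.2.2

theorem isEmbedding_cell (i : d.I) (α β : d.ι i) : IsEmbedding fun g => d.cell i α g β :=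
  d.embed i α β

theorem t35Space_group [T35Space S] (i : d.I) : T35Space (d.G i) := by
  obtain ⟨α⟩ := d.instNonempty i
  exact (d.isEmbedding_cell i α α).t35Space

theorem symm_zero : d.e.symm 0 = 0 := by
  rw [← d.map_zero, Homeomorph.symm_apply_apply]

theorem cell_ne_zero (i : d.I) (α : d.ι i) (g : d.G i) (β : d.ι i) : d.cell i α g β ≠ 0 := by
  rw [cell, ← d.symm_zero, d.e.symm.injective.ne_iff]
  exact Option.some_ne_none _

theorem eq_zero_or_exists_cell (s : S) : s = 0 ∨ ∃ i α g β, s = d.cell i α g β := by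
  rcases h : d.e s with _ | ⟨i, α, g, β⟩
  · exact Or.inl (d.e.eq_symm_apply.2 h |>.trans d.symm_zero)
  · exact Or.inr ⟨i, α, g, β, d.e.eq_symm_apply.2 h⟩

theorem cell_mul_cell (i : d.I) (α β γ : d.ι i) (a b : d.G i) :
    d.cell i α a β * d.cell i β b γ = d.cell i α (a * b) γ := by
  apply d.e.injective
  simp only [cell, d.map_mul, Homeomorph.apply_symm_apply, OrthSum.elem_mul_elem]

theorem cell_mul_cell_of_ne {i j : d.I} (α β : d.ι i) (γ δ : d.ι j) (a : d.G i) (b : d.G j)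
    (h : (⟨i, β⟩ : Σ i, d.ι i) ≠ ⟨j, γ⟩) : d.cell i α a β * d.cell j γ b δ = 0 := by
  apply d.e.injective
  simp only [cell, d.map_mul, Homeomorph.apply_symm_apply, d.map_zero,
    OrthSum.elem_mul_elem_of_ne _ _ _ _ _ _ h]

theorem inv_cell (hinv : IsInverseSemigroup S inv) (i : d.I) (α : d.ι i)
    (g : d.G i) (β : d.ι i) : inv (d.cell i α g β) = d.cell i β g⁻¹ α :=
  (hinv.inv_unique _ _ (by simp [cell_mul_cell]) (by simp [cell_mul_cell])).symm

theorem mem_layer_cell (i : d.I) (α : d.ι i) (g : d.G i) (β : d.ι i) :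
    d.cell i α g β ∈ d.layer ⟨i, (α, β)⟩ :=
  ⟨g, rfl⟩

theorem pairwise_disjoint_layer : Pairwise (Disjoint on d.layer) := by
  rintro ⟨i, α, β⟩ ⟨j, γ, δ⟩ hpq
  refine disjoint_left.2 ?_
  rintro _ ⟨g, rfl⟩ ⟨h, hh⟩
  exact hpq (OrthSum.sigma_eq_of_elem_eq (d.e.symm.injective hh)).symm

theorem zero_notMem_layer (p : Σ i, d.ι i × d.ι i) : (0 : S) ∉ d.layer p := by
  rintro ⟨g, hg⟩
  exact d.cell_ne_zero _ _ _ _ hg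

theorem exists_mem_layer {s : S} (hs : s ≠ 0) : ∃ p, s ∈ d.layer p := by
  obtain ⟨i, α, g, β, rfl⟩ := (d.eq_zero_or_exists_cell s).resolve_left hs
  exact ⟨_, d.mem_layer_cell i α g β⟩

def corner (p : Σ i, d.ι i × d.ι i) (s : S) : S :=
  d.cell p.1 p.2.1 1 p.2.1 * s * d.cell p.1 p.2.2 1 p.2.2

theorem corner_of_mem {p : Σ i, d.ι i × d.ι i} {s : S} (hs : s ∈ d.layer p) :
    d.corner p s = s := by
  obtain ⟨g, rfl⟩ := hs
  simp only [corner, cell_mul_cell, one_mul, mul_one]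

theorem corner_of_notMem {p : Σ i, d.ι i × d.ι i} {s : S} (hs : s ∉ d.layer p) :
    d.corner p s = 0 := by
  obtain ⟨i, α, β⟩ := p
  rcases d.eq_zero_or_exists_cell s with rfl | ⟨j, γ, g, δ, rfl⟩
  · simp only [corner, mul_zero, zero_mul]
  by_cases hαγ : (⟨i, α⟩ : Σ i, d.ι i) = ⟨j, γ⟩
  · obtain ⟨rfl, rfl⟩ := Sigma.mk.inj_iff.1 hαγ
    have hδβ : (⟨i, δ⟩ : Σ i, d.ι i) ≠ ⟨i, β⟩ := by
      rintro h
      obtain rfl := eq_of_heq (Sigma.mk.inj_iff.1 h).2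
      exact hs (d.mem_layer_cell i α g δ)
    rw [corner, cell_mul_cell, d.cell_mul_cell_of_ne _ _ _ _ _ _ hδβ]
  · simp only [corner, d.cell_mul_cell_of_ne _ _ _ _ _ _ hαγ, zero_mul]

theorem layer_eq_preimage_corner (p : Σ i, d.ι i × d.ι i) :
    d.layer p = d.corner p ⁻¹' {0}ᶜ := by
  ext s
  by_cases hs : s ∈ d.layer p
  · simpa [hs, d.corner_of_mem hs] using ne_of_mem_of_not_mem hs (d.zero_notMem_layer p)
  · simp [hs, d.corner_of_notMem hs]

theorem layer_subset_of_subset_closure (hinv : IsInverseSemigroup S inv) {U V : Set S}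
    (hVo : IsOpen V) (hVU : ∀ a ∈ V, ∀ b ∈ V, ∀ c ∈ V, a * inv b * c ∈ U)
    {p : Σ i, d.ι i × d.ι i} (hp : d.layer p ⊆ closure (V ∩ d.layer p)) : d.layer p ⊆ U := by
  obtain ⟨i, α, β⟩ := p
  have hφ := d.isEmbedding_cell i α β
  have hD : Dense ((fun g => d.cell i α g β) ⁻¹' V) := fun g => by
    rw [hφ.closure_eq_preimage_closure_image, image_preimage_eq_inter_range]
    exact hp ⟨g, rfl⟩
  rintro _ ⟨t, rfl⟩
  obtain ⟨a, ha, b, hb, c, hc, rfl⟩ :=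
    exists_mul_inv_mul_eq_of_dense hD (hVo.preimage hφ.continuous) t
  have h : d.cell i α (a * b⁻¹ * c) β =
      d.cell i α a β * inv (d.cell i α b β) * d.cell i α c β := by
    rw [d.inv_cell hinv, cell_mul_cell, cell_mul_cell]
  change d.cell i α (a * b⁻¹ * c) β ∈ U
  rw [h]
  exact hVU _ ha _ hb _ hc

variable [ContinuousMul S] [T1Space S]

theorem isOpen_layer (p : Σ i, d.ι i × d.ι i) : IsOpen (d.layer p) := by
  rw [layer_eq_preimage_corner]
  exact isOpen_compl_singleton.preimage (by unfold corner; fun_prop)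

theorem zero_notMem_closure_layer (hinv : IsInverseSemigroup S inv) (hinvc : Continuous inv)
    (p : Σ i, d.ι i × d.ι i) : (0 : S) ∉ closure (d.layer p) := by
  obtain ⟨i, α, β⟩ := p
  have hconst : MapsTo (fun s => s * inv s) (d.layer ⟨i, (α, β)⟩) {d.cell i α 1 α} := by
    rintro _ ⟨g, rfl⟩
    simp [d.inv_cell hinv, cell_mul_cell]
  intro h0
  have h := map_mem_closure (by fun_prop) h0 hconst
  simp only [closure_singleton, mem_singleton_iff, zero_mul] at h
  exact d.cell_ne_zero _ _ _ _ h.symm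

theorem isClosed_layer (hinv : IsInverseSemigroup S inv) (hinvc : Continuous inv)
    (p : Σ i, d.ι i × d.ι i) : IsClosed (d.layer p) := by
  refine closure_subset_iff_isClosed.1 fun s hs => ?_
  by_contra hsp
  have h := map_mem_closure (by unfold corner; fun_prop) hs
    fun t ht => (d.corner_of_mem ht).symm ▸ ht
  rw [d.corner_of_notMem hsp] at h
  exact d.zero_notMem_closure_layer hinv hinvc p h

theorem isClopen_layer (hinv : IsInverseSemigroup S inv) (hinvc : Continuous inv)
    (p : Σ i, d.ι i × d.ι i) : IsClopen (d.layer p) :=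
  ⟨d.isClosed_layer hinv hinvc p, d.isOpen_layer p⟩

theorem locallyFinite_of_subset_layer {F : (Σ i, d.ι i × d.ι i) → Set S}
    (hF : ∀ p, F p ⊆ d.layer p) {V : Set S} (hV : V ∈ 𝓝 0) (hFV : ∀ p, Disjoint (F p) V) :
    LocallyFinite F := by
  intro s
  rcases eq_or_ne s 0 with rfl | hs
  · exact ⟨V, hV, by simp [(hFV _).inter_eq]⟩
  · obtain ⟨q, hq⟩ := d.exists_mem_layer hs
    refine ⟨d.layer q, (d.isOpen_layer q).mem_nhds hq, (finite_singleton q).subset ?_⟩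
    rintro p ⟨t, htp, htq⟩
    exact d.pairwise_disjoint_layer.eq (not_disjoint_iff.2 ⟨t, hF p htp, htq⟩)

theorem finite_setOf_not_subset_closure (hpc : IsPseudocompact S) {V : Set S} (hV : V ∈ 𝓝 0) :
    {p | ¬ d.layer p ⊆ closure (V ∩ d.layer p)}.Finite := by
  simp_rw [← sdiff_nonempty]
  refine hpc.finite_setOf_nonempty
    (d.locallyFinite_of_subset_layer (fun p => sdiff_subset) hV fun p => ?_)
    (fun p => (d.isOpen_layer p).sdiff isClosed_closure)
    fun p q hpq => (d.pairwise_disjoint_layer hpq).mono sdiff_subset sdiff_subset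
  exact disjoint_left.2 fun s hs hsV => hs.2 (subset_closure ⟨hsV, hs.1⟩)

end

variable [ContinuousMul S] [T1Space S]

theorem exists_isClopen_subset (d : TopBrandtDecomposition S) (hinv : IsInverseSemigroup S inv)
    (hinvc : Continuous inv) (hpc : IsPseudocompact S) {U : Set S} (hU : U ∈ 𝓝 0) :
    ∃ O, IsClopen O ∧ (0 : S) ∈ O ∧ O ⊆ U := by
  obtain ⟨V, hVo, h0V, hVU⟩ := hinv.exists_isOpen_forall_mul_inv_mul_mem hinvc hU
  set B := {p | ¬ d.layer p ⊆ U}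
  have hB : B.Finite := (d.finite_setOf_not_subset_closure hpc (hVo.mem_nhds h0V)).subset
    fun p hp hpV => hp (d.layer_subset_of_subset_closure hinv hVo hVU hpV)
  refine ⟨(⋃ p ∈ B, d.layer p)ᶜ, ⟨(isOpen_biUnion fun p _ => d.isOpen_layer p).isClosed_compl,
    (hB.isClosed_biUnion fun p _ => d.isClosed_layer hinv hinvc p).isOpen_compl⟩, ?_, ?_⟩
  · simpa using fun p _ => d.zero_notMem_layer p
  · intro s hs
    rcases eq_or_ne s 0 with rfl | hs0
    · exact mem_of_mem_nhds hU
    obtain ⟨p, hp⟩ := d.exists_mem_layer hs0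
    by_contra hsU
    exact hs (mem_biUnion (show p ∈ B from fun h => hsU (h hp)) hp)

theorem completelyRegularSpace (d : TopBrandtDecomposition S) (hinv : IsInverseSemigroup S inv)
    (hinvc : Continuous inv) (hpc : IsPseudocompact S) : CompletelyRegularSpace S := by
  refine ⟨fun x K hK hxK => ?_⟩
  rcases eq_or_ne x 0 with rfl | hx
  · obtain ⟨O, hO, h0O, hOK⟩ :=
      d.exists_isClopen_subset hinv hinvc hpc (hK.isOpen_compl.mem_nhds hxK)
    exact ⟨Oᶜ.indicator 1, hO.compl.continuous_indicator continuous_const, by simp [h0O],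
      fun y hy => indicator_of_mem (show y ∈ Oᶜ from fun hyO => hOK hyO hy) _⟩
  · obtain ⟨⟨i, α, β⟩, hxp⟩ := d.exists_mem_layer hx
    have : CompletelyRegularSpace (d.layer ⟨i, (α, β)⟩) :=
      (d.isEmbedding_cell i α β).toHomeomorph.symm.isEmbedding.isInducing.completelyRegularSpace
    exact (d.isClopen_layer hinv hinvc _).exists_continuous_zero_one hxp hK hxK

end TopBrandtDecomposition

theorem tychonoff_iff_groups_tychonoff_general
    {S : Type*} [SemigroupWithZero S] [TopologicalSpace S] [T2Space S]
    (continuous_mul : Continuous fun p : S × S => p.1 * p.2)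
    (inv : S → S) (hinv : IsInverseSemigroup S inv) (hinvc : Continuous inv)
    (hpc : IsPseudocompact S)
    (d : TopBrandtDecomposition S) :
    T35Space S ↔ ∀ i : d.I, @T35Space (d.G i) (d.instTopG i) := by
  have : ContinuousMul S := ⟨continuous_mul⟩
  have : CompletelyRegularSpace S := d.completelyRegularSpace hinv hinvc hpc
  exact ⟨fun _ => d.t35Space_group, fun _ => { }⟩

/-- Let `S` be a primitive Hausdorff pseudocompact topological
inverse semigroup, topologically isomorphic to the orthogonal sum of
topological Brandt `λ i`-extensions of topological groups `G i`. Then `S` is a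
Tychonoff space iff for every `i` the space of the topological group `G i` is
Tychonoff. -/
theorem tychonoff_iff_groups_tychonoff
    {S : Type*} [SemigroupWithZero S] [TopologicalSpace S] [T2Space S]
    (continuous_mul : Continuous fun p : S × S => p.1 * p.2)
    (inv : S → S) (hinv : IsInverseSemigroup S inv) (hinvc : Continuous inv)
    (hnt : Nontrivial S) (hprim : IsPrimitiveInverse S)
    (hpc : IsPseudocompact S)
    (d : TopBrandtDecomposition S) :
    T35Space S ↔ ∀ i : d.I, @T35Space (d.G i) (d.instTopG i) :=
  tychonoff_iff_groups_tychonoff_general continuous_mul inv hinv hinvc hpc d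
end
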